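/- arXiv:1601.03622 — 4 statements merged into one kernel-verified Lean document; each statement's English description precedes it below -/
import Mathlib

section
/- Let p be an odd prime and k a field of characteristic p. Let g ∈ k[[ζ]] be a power series with g(ζ) ≡ ζ(1 + a_2ζ^2 + a_3ζ^3 + a_4ζ^4) modulo ζ^6. Then g^p(ζ) − ζ ≡ a_2^{p−2}·((3/2)·a_2^3 + a_3^2 − a_2·a_4)·ζ^{2p+3} modulo ζ^{2p+4}, where g^p denotes the p-fold composition of g with itself and 3/2 denotes 3·2⁻¹ in k. -/
/-- Composition of formal power series: `f.comp g = f ∘ g`, the power series obtained by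
substituting `g` into `f`.  (This gives the usual composition whenever the constant
coefficient of `g` is zero.) -/
noncomputable def PowerSeries.comp {R : Type*} [CommSemiring R] (f g : PowerSeries R) :
    PowerSeries R :=
  PowerSeries.mk fun n =>
    ∑ i ∈ Finset.range (n + 1), PowerSeries.coeff i f * PowerSeries.coeff n (g ^ i)

/-- The `m`-fold composition `g ∘ g ∘ ⋯ ∘ g` of a power series with itself
(`m = 0` gives the identity series `X`). -/
noncomputable def PowerSeries.compIterate {R : Type*} [CommSemiring R]
    (g : PowerSeries R) (m : ℕ) : PowerSeries R :=
  (fun h => PowerSeries.comp h g)^[m] PowerSeries.X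

/-!
Write `T h = h ∘ g`, a linear operator on `k⟦ζ⟧`, and `Δ = T - 1`. In characteristic `p`,
`T ^ p = 1 + Δ ^ p`, so `g^p - ζ = Δ^p ζ`. If `h` vanishes to order `m` with next coefficients
`c, d, e`, expanding `g^i` up to `ζ^(i+4)` shows that `Δ h` vanishes to order `m + 2` with next
coefficients `m a₂ c`, `m a₃ c + (m+1) a₂ d` and
`(m a₄ + (m choose 2) a₂²) c + (m+1) a₃ d + (m+2) a₂ e`.
Iterating from `ζ` gives closed forms for the leading coefficients of `Δ^r ζ` in terms of double
factorials and of two sequences solving `x (r+1) = (2r+3) x r + s r`. For `p = 2t + 3` the double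
factorials occurring at `r = p` vanish, and since the factor `2r + 3` vanishes at `r = t` the two
sequences collapse to a single term, which Wilson's theorem evaluates.
-/

open PowerSeries Finset
open scoped Nat

def oddRecurrence {R : Type*} [CommRing R] (s : ℕ → R) : ℕ → R
  | 0 => 0
  | r + 1 => (2 * r + 3) * oddRecurrence s r + s r

theorem oddRecurrence_succ {R : Type*} [CommRing R] (s : ℕ → R) (r : ℕ) :
    oddRecurrence s (r + 1) = (2 * r + 3) * oddRecurrence s r + s r := rfl

/-- Where `2t + 3 = 0`, the step at `r = t` erases all earlier terms, and afterwards
`2r + 3 = 2(r - t)`. -/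
theorem oddRecurrence_eq_of_cast_eq_zero {R : Type*} [CommRing R] {t : ℕ}
    (ht : ((2 * t + 3 : ℕ) : R) = 0) {s : ℕ → R} (hs : ∀ j, t < j → j < 2 * t + 3 → s j = 0) :
    oddRecurrence s (2 * t + 3) = s t * (2 * t + 4)‼ := by
  push_cast at ht
  have key : ∀ i ≤ t + 2, oddRecurrence s (t + 1 + i) = s t * (2 * i)‼ := by
    intro i hi
    induction i with
    | zero => simp [oddRecurrence_succ, ht]
    | succ i ih =>
      rw [← add_assoc, oddRecurrence_succ, ih (by omega), hs (t + 1 + i) (by omega) (by omega),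
        show 2 * (i + 1) = 2 * i + 2 by ring, Nat.doubleFactorial_add_two]
      push_cast
      linear_combination (s t * (2 * i)‼) * ht
  simpa [show t + 1 + (t + 2) = 2 * t + 3 by ring, show 2 * (t + 2) = 2 * t + 4 by ring]
    using key (t + 2) le_rfl

theorem Nat.dvd_doubleFactorial_add_two_mul {m : ℕ} (hm : 0 < m) (i : ℕ) : m ∣ (m + 2 * i)‼ := by
  induction i with
  | zero =>
    obtain ⟨n, rfl⟩ : ∃ n, m = n + 1 := ⟨m - 1, by omega⟩
    rw [mul_zero, add_zero, Nat.doubleFactorial_add_one]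
    exact dvd_mul_right _ _
  | succ i ih =>
    rw [show m + 2 * (i + 1) = m + 2 * i + 2 by ring, Nat.doubleFactorial_add_two]
    exact ih.mul_left _

theorem cast_doubleFactorial_mul_doubleFactorial_eq_neg_one {R : Type*} [CommRing R] {t : ℕ}
    (hp : (2 * t + 3).Prime) [CharP R (2 * t + 3)] :
    ((2 * t + 1)‼ * (2 * t + 4)‼ : R) = -1 := by
  have hwilson : (((2 * t + 2)! : ℕ) : R) = -1 := by
    have := Fact.mk hp
    simpa using congrArg (ZMod.castHom (dvd_refl _) R) (ZMod.wilsons_lemma (p := 2 * t + 3))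
  have hp0 : ((2 * t + 3 : ℕ) : R) = 0 := CharP.cast_eq_zero R _
  rw [Nat.factorial_eq_mul_doubleFactorial] at hwilson
  rw [show 2 * t + 4 = 2 * t + 2 + 2 by ring, Nat.doubleFactorial_add_two]
  push_cast at hwilson hp0 ⊢
  linear_combination hwilson + (2 * t + 2)‼ * (2 * t + 1)‼ * hp0

theorem cast_eq_neg_three_div_two {K : Type*} [Field K] {t : ℕ} [CharP K (2 * t + 3)] :
    (t : K) = -3 / 2 := by
  have h2 : (2 : K) ≠ 0 := fun h2 => by
    have := (CharP.cast_eq_zero_iff K (2 * t + 3) 2).1 (by exact_mod_cast h2)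
    have := Nat.le_of_dvd two_pos this
    omega
  have h0 : ((2 * t + 3 : ℕ) : K) = 0 := CharP.cast_eq_zero K _
  push_cast at h0
  field_simp
  linear_combination h0

namespace PowerSeries

variable {R : Type*} [CommRing R]

theorem coeff_comp (f g : R⟦X⟧) (n : ℕ) :
    coeff n (f.comp g) = ∑ i ∈ range (n + 1), coeff i f * coeff n (g ^ i) :=
  coeff_mk _ _

noncomputable def compLinear (g : R⟦X⟧) : Module.End R R⟦X⟧ where
  toFun f := f.comp g
  map_add' f f' := by ext n; simp [coeff_comp, add_mul, sum_add_distrib]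
  map_smul' r f := by ext n; simp [coeff_comp, mul_sum, mul_assoc]

noncomputable def compDiff (g : R⟦X⟧) : Module.End R R⟦X⟧ := compLinear g - 1

theorem compDiff_apply (g f : R⟦X⟧) : compDiff g f = f.comp g - f := rfl

theorem compIterate_eq_compLinear_pow_apply (g : R⟦X⟧) (m : ℕ) :
    g.compIterate m = (compLinear g ^ m) X := by
  rw [Module.End.pow_apply]; rfl

theorem compIterate_sub_X_eq_compDiff_pow_apply {p : ℕ} [Fact p.Prime] [CharP R p] (g : R⟦X⟧) :
    g.compIterate p - X = (compDiff g ^ p) X := by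
  have : CharP (Module.End R R⟦X⟧) p := Module.charP_end ⟨1, by
    ext r; simp [Ideal.mem_torsionOf_iff, smul_eq_C_mul, map_eq_zero_iff _ C_injective]⟩
  have h := add_pow_char_of_commute p (Commute.one_left (compDiff g))
  rw [compDiff, add_sub_cancel, one_pow] at h
  rw [compIterate_eq_compLinear_pow_apply, h, LinearMap.add_apply, Module.End.one_apply,
    add_sub_cancel_left, compDiff]

theorem coeff_comp_sub_self (f g : R⟦X⟧) (n : ℕ) :
    coeff n (f.comp g - f) = ∑ i ∈ range (n + 1), coeff i f * coeff n (g ^ i - X ^ i) := by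
  simp only [map_sub, coeff_comp, mul_sub, sum_sub_distrib, coeff_X_pow]
  simp

theorem coeff_comp_sub_self_of_lt {f g : R⟦X⟧} {m : ℕ} (hf : ∀ n < m, coeff n f = 0)
    (hg : ∀ i, ∀ n < i + 2, coeff n (g ^ i - X ^ i) = 0) {n : ℕ} (hn : n < m + 2) :
    coeff n (f.comp g - f) = 0 := by
  rw [coeff_comp_sub_self]
  refine sum_eq_zero fun i _ => ?_
  rcases lt_or_ge i m with him | him
  · rw [hf i him, zero_mul]
  · rw [hg i n (by omega), mul_zero]

theorem coeff_comp_sub_self_eq_sum {f g : R⟦X⟧} {m : ℕ} (hf : ∀ n < m, coeff n f = 0)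
    (hg : ∀ i, ∀ n < i + 2, coeff n (g ^ i - X ^ i) = 0) (j : ℕ) :
    coeff (m + 2 + j) (f.comp g - f) =
      ∑ l ∈ range (j + 1), coeff (m + l) f * coeff (m + 2 + j) (g ^ (m + l) - X ^ (m + l)) := by
  rw [coeff_comp_sub_self, show m + 2 + j + 1 = m + (j + 1 + 2) by omega, sum_range_add,
    sum_range_succ, sum_range_succ, sum_eq_zero fun i hi => by rw [hf i (mem_range.1 hi), zero_mul],
    hg _ _ (by omega), hg _ _ (by omega)]
  simp

def HasLeadingCoeffs (f : R⟦X⟧) (m : ℕ) (c d e : R) : Prop :=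
  (∀ n < m, coeff n f = 0) ∧ coeff m f = c ∧ coeff (m + 1) f = d ∧ coeff (m + 2) f = e

theorem hasLeadingCoeffs_X : HasLeadingCoeffs (X : R⟦X⟧) 1 1 0 0 :=
  ⟨fun n hn => by rw [coeff_X, if_neg (by omega)], by simp, by simp [coeff_X], by simp [coeff_X]⟩

theorem HasLeadingCoeffs.X_pow_mul {f : R⟦X⟧} {m : ℕ} {c d e : R}
    (hf : HasLeadingCoeffs f m c d e) (i : ℕ) : HasLeadingCoeffs (X ^ i * f) (i + m) c d e := by
  obtain ⟨hlow, hc, hd, he⟩ := hf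
  refine ⟨fun n hn => ?_, ?_, ?_, ?_⟩ <;> rw [coeff_X_pow_mul']
  · split_ifs with hin
    · exact hlow _ (by omega)
    · rfl
  all_goals rw [if_pos (by omega)]; simpa only [add_assoc, Nat.add_sub_cancel_left]

theorem hasLeadingCoeffs_pow_sub_one {u : R⟦X⟧} {a₂ a₃ a₄ : R}
    (hu : ∀ n < 5, coeff n u = coeff n (1 + C a₂ * X ^ 2 + C a₃ * X ^ 3 + C a₄ * X ^ 4 : R⟦X⟧))
    (i : ℕ) :
    HasLeadingCoeffs (u ^ i - 1) 2 (i * a₂) (i * a₃) (i * a₄ + i.choose 2 * a₂ ^ 2) := by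
  have u₀ : constantCoeff u = 1 := by simpa [coeff_X_pow] using hu 0 (by norm_num)
  have u₁ : coeff 1 u = 0 := by simpa [coeff_X_pow] using hu 1 (by norm_num)
  have u₂ : coeff 2 u = a₂ := by simpa [coeff_X_pow] using hu 2 (by norm_num)
  have u₃ : coeff 3 u = a₃ := by simpa [coeff_X_pow] using hu 3 (by norm_num)
  have u₄ : coeff 4 u = a₄ := by simpa [coeff_X_pow] using hu 4 (by norm_num)
  suffices h : coeff 1 (u ^ i) = 0 ∧ coeff 2 (u ^ i) = i * a₂ ∧ coeff 3 (u ^ i) = i * a₃ ∧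
      coeff 4 (u ^ i) = i * a₄ + i.choose 2 * a₂ ^ 2 by
    refine ⟨fun n hn => ?_, ?_, ?_, ?_⟩
    · interval_cases n <;> simp [u₀, h.1]
    all_goals simp [h]
  induction i with
  | zero => simp
  | succ i ih =>
    obtain ⟨h₁, h₂, h₃, h₄⟩ := ih
    refine ⟨?_, ?_, ?_, ?_⟩ <;>
      simp [pow_succ, coeff_mul, Finset.Nat.antidiagonal_succ, u₀, u₁, u₂, u₃, u₄, h₁, h₂, h₃, h₄,
        Nat.choose_succ_succ] <;>
      ring

theorem HasLeadingCoeffs.compDiff {u f : R⟦X⟧} {a₂ a₃ a₄ : R}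
    (hu : ∀ n < 5, coeff n u = coeff n (1 + C a₂ * X ^ 2 + C a₃ * X ^ 3 + C a₄ * X ^ 4 : R⟦X⟧))
    {m : ℕ} {c d e : R} (hf : HasLeadingCoeffs f m c d e) :
    HasLeadingCoeffs (compDiff (X * u) f) (m + 2) (m * a₂ * c) (m * a₃ * c + (m + 1) * a₂ * d)
      ((m * a₄ + m.choose 2 * a₂ ^ 2) * c + (m + 1) * a₃ * d + (m + 2) * a₂ * e) := by
  have hD (i : ℕ) : HasLeadingCoeffs ((X * u) ^ i - X ^ i) (i + 2)
      (i * a₂) (i * a₃) (i * a₄ + i.choose 2 * a₂ ^ 2) := by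
    rw [mul_pow, ← mul_sub_one]
    exact (hasLeadingCoeffs_pow_sub_one hu i).X_pow_mul i
  obtain ⟨hlow, hc, hd, he⟩ := hf
  have hsum := coeff_comp_sub_self_eq_sum hlow (fun i => (hD i).1)
  obtain ⟨-, h₀, h₁, h₂⟩ := hD m
  obtain ⟨-, h₀', h₁', -⟩ := hD (m + 1)
  obtain ⟨-, h₀'', -, -⟩ := hD (m + 2)
  rw [show m + 1 + 2 = m + 2 + 1 by omega] at h₀'
  rw [show m + 1 + 2 + 1 = m + 2 + 2 by omega] at h₁'
  rw [compDiff_apply]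
  refine ⟨fun n hn => coeff_comp_sub_self_of_lt hlow (fun i => (hD i).1) hn, ?_, ?_, ?_⟩
  · rw [show m + 2 = m + 2 + 0 from rfl, hsum]
    simp only [sum_range_succ, sum_range_zero, zero_add, add_zero, hc, h₀]
    ring
  all_goals
    simp only [hsum, sum_range_succ, sum_range_zero, zero_add, add_zero, hc, hd, he, h₁, h₂,
      h₀', h₁', h₀'']
    push_cast
    ring

/-- The `a₃²` coefficient solves `x (r+1) = (2r+3) x r + (2r+2) ((2r+1)‼ - (2r)‼)`; its closed form
comes from the telescoping sum `∑ (2j+2)‼ / (2j+3)‼ = (2r+2)‼ / (2r+1)‼ - 2`. -/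
theorem hasLeadingCoeffs_compDiff_pow {u : R⟦X⟧} {a₂ a₃ a₄ : R}
    (hu : ∀ n < 5, coeff n u = coeff n (1 + C a₂ * X ^ 2 + C a₃ * X ^ 3 + C a₄ * X ^ 4 : R⟦X⟧))
    (r : ℕ) :
    HasLeadingCoeffs ((compDiff (X * u) ^ (r + 2)) X) (2 * r + 5)
      ((2 * r + 3)‼ * a₂ ^ (r + 2))
      ((((2 * r + 5)‼ : R) - (2 * r + 4)‼) * a₃ * a₂ ^ (r + 1))
      (oddRecurrence (fun j => ((2 * j + 1)‼ : R)) (r + 2) * a₄ * a₂ ^ (r + 1) +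
        (2 * (oddRecurrence (fun j => ((2 * j + 1)‼ : R)) (r + 2) +
          oddRecurrence (fun j => (j * (2 * j + 1)‼ : R)) (r + 2) + (2 * r + 5)‼) - (2 * r + 6)‼) *
          a₃ ^ 2 * a₂ ^ r +
        oddRecurrence (fun j => (j * (2 * j + 1)‼ : R)) (r + 2) * a₂ ^ (r + 3)) := by
  induction r with
  | zero =>
    have h := (hasLeadingCoeffs_X.compDiff hu).compDiff hu
    rw [← Module.End.mul_apply, ← pow_two] at h
    convert h using 1 <;> norm_num [oddRecurrence_succ, oddRecurrence, Nat.doubleFactorial] <;> ring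
  | succ r ih =>
    have h := ih.compDiff hu
    rw [← Module.End.mul_apply, ← _root_.pow_succ'] at h
    have hC : ((2 * r + 5).choose 2 : R) = (2 * r + 5) * (r + 2) := by
      rw [Nat.choose_two_right, show 2 * r + 5 - 1 = 2 * (r + 2) by omega,
        show (2 * r + 5) * (2 * (r + 2)) = (2 * r + 5) * (r + 2) * 2 by ring,
        Nat.mul_div_cancel _ two_pos]
      push_cast; ring
    have h₃ : (2 * (r + 1) + 3)‼ = (2 * r + 5) * (2 * r + 3)‼ := Nat.doubleFactorial_add_two _
    have h₄ : (2 * (r + 1) + 4)‼ = (2 * r + 6) * (2 * r + 4)‼ := Nat.doubleFactorial_add_two _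
    have h₅ : (2 * (r + 1) + 5)‼ = (2 * r + 7) * (2 * r + 5)‼ := Nat.doubleFactorial_add_two _
    have h₆ : (2 * (r + 1) + 6)‼ = (2 * r + 8) * (2 * r + 6)‼ := Nat.doubleFactorial_add_two _
    have h₇ : (2 * r + 5)‼ = (2 * r + 5) * (2 * r + 3)‼ := Nat.doubleFactorial_add_two _
    have h₈ : (2 * r + 6)‼ = (2 * r + 6) * (2 * r + 4)‼ := Nat.doubleFactorial_add_two _
    have hP : oddRecurrence (fun j => ((2 * j + 1)‼ : R)) (r + 1 + 2) =
        (2 * (r + 2 : ℕ) + 3) * oddRecurrence (fun j => ((2 * j + 1)‼ : R)) (r + 2) +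
          (2 * r + 5)‼ :=
      oddRecurrence_succ _ _
    have hQ : oddRecurrence (fun j => (j * (2 * j + 1)‼ : R)) (r + 1 + 2) =
        (2 * (r + 2 : ℕ) + 3) * oddRecurrence (fun j => (j * (2 * j + 1)‼ : R)) (r + 2) +
          (r + 2 : ℕ) * (2 * r + 5)‼ :=
      oddRecurrence_succ _ _
    rw [hP, hQ, h₃, h₄, h₅, h₆]
    convert h using 1
    · ring
    all_goals simp only [hC, h₇, h₈, Nat.cast_mul, Nat.cast_add, Nat.cast_ofNat]; ring

theorem hasLeadingCoeffs_compDiff_pow_of_charP {t : ℕ}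
    (hp : (2 * t + 3).Prime) [CharP R (2 * t + 3)] {u : R⟦X⟧} {a₂ a₃ a₄ : R}
    (hu : ∀ n < 5, coeff n u = coeff n (1 + C a₂ * X ^ 2 + C a₃ * X ^ 3 + C a₄ * X ^ 4 : R⟦X⟧)) :
    HasLeadingCoeffs ((compDiff (X * u) ^ (2 * t + 3)) X) (2 * (2 * t + 3) + 1) 0 0
      (a₂ ^ (2 * t + 1) * (a₃ ^ 2 - a₂ * a₄ - t * a₂ ^ 3)) := by
  have hp0 : ((2 * t + 3 : ℕ) : R) = 0 := CharP.cast_eq_zero R _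
  have hodd (i : ℕ) : ((2 * t + 3 + 2 * i)‼ : R) = 0 :=
    (CharP.cast_eq_zero_iff R _ _).2 (Nat.dvd_doubleFactorial_add_two_mul (by omega) i)
  have heven (i : ℕ) : ((2 * (2 * t + 3) + 2 * i)‼ : R) = 0 :=
    (CharP.cast_eq_zero_iff R _ _).2
      ((dvd_mul_left _ 2).trans (Nat.dvd_doubleFactorial_add_two_mul (by omega) i))
  have hvanish (j : ℕ) (hj : t < j) : ((2 * j + 1)‼ : R) = 0 := by
    rw [show 2 * j + 1 = 2 * t + 3 + 2 * (j - t - 1) by omega, hodd]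
  have hP : oddRecurrence (fun j => ((2 * j + 1)‼ : R)) (2 * t + 3) = -1 := by
    rw [oddRecurrence_eq_of_cast_eq_zero hp0 fun j hj _ => hvanish j hj,
      cast_doubleFactorial_mul_doubleFactorial_eq_neg_one hp]
  have hQ : oddRecurrence (fun j => (j * (2 * j + 1)‼ : R)) (2 * t + 3) = -t := by
    rw [oddRecurrence_eq_of_cast_eq_zero hp0 fun j hj _ => by rw [hvanish j hj, mul_zero],
      mul_assoc, cast_doubleFactorial_mul_doubleFactorial_eq_neg_one hp, mul_neg_one]
  have h := hasLeadingCoeffs_compDiff_pow hu (2 * t + 1)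
  rw [show 2 * t + 1 + 2 = 2 * t + 3 by ring,
    show 2 * (2 * t + 1) + 5 = 2 * (2 * t + 3) + 1 by ring,
    show 2 * (2 * t + 1) + 3 = 2 * t + 3 + 2 * (t + 1) by ring,
    show 2 * (2 * t + 3) + 1 = 2 * t + 3 + 2 * (t + 2) by ring,
    show 2 * (2 * t + 1) + 4 = 2 * (2 * t + 3) + 2 * 0 by ring,
    show 2 * (2 * t + 1) + 6 = 2 * (2 * t + 3) + 2 * 1 by ring,
    hodd, hodd, heven, heven, hP, hQ] at h
  convert h using 1
  · ring
  · ring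
  · ring
  · push_cast at hp0
    linear_combination a₃ ^ 2 * a₂ ^ (2 * t + 1) * hp0

end PowerSeries

theorem pth_iterate_first_terms
    {p : ℕ} (hp : p.Prime) (hp2 : p ≠ 2)
    {k : Type*} [Field k] (hchar : CharP k p)
    (g : PowerSeries k) (a2 a3 a4 : k)
    (hg : ∀ n : ℕ, n < 6 → PowerSeries.coeff n g =
      PowerSeries.coeff n (PowerSeries.X * (1 + PowerSeries.C a2 * PowerSeries.X ^ 2
        + PowerSeries.C a3 * PowerSeries.X ^ 3 + PowerSeries.C a4 * PowerSeries.X ^ 4))) :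
    ∀ n : ℕ, n < 2 * p + 4 →
      PowerSeries.coeff n (PowerSeries.compIterate g p - PowerSeries.X) =
      PowerSeries.coeff n (PowerSeries.monomial (2 * p + 3)
        (a2 ^ (p - 2) * ((3 / 2 : k) * a2 ^ 3 + a3 ^ 2 - a2 * a4))) := by
  obtain ⟨t, rfl⟩ : ∃ t, p = 2 * t + 3 := by
    obtain ⟨m, hm⟩ := hp.odd_of_ne_two hp2
    exact ⟨m - 1, by have := hp.two_le; omega⟩
  have := Fact.mk hp
  obtain ⟨u, rfl⟩ : X ∣ g := X_dvd_iff.2 (by simpa using hg 0 (by norm_num))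
  have hu (n : ℕ) (hn : n < 5) :
      coeff n u = coeff n (1 + C a2 * X ^ 2 + C a3 * X ^ 3 + C a4 * X ^ 4 : k⟦X⟧) := by
    simpa only [coeff_succ_X_mul] using hg (n + 1) (by omega)
  obtain ⟨hlow, hc, hd, he⟩ := hasLeadingCoeffs_compDiff_pow_of_charP hp hu
  intro n hn
  rw [compIterate_sub_X_eq_compDiff_pow_apply, coeff_monomial]
  obtain hn | rfl | rfl | rfl : n < 2 * (2 * t + 3) + 1 ∨ n = 2 * (2 * t + 3) + 1 ∨
      n = 2 * (2 * t + 3) + 1 + 1 ∨ n = 2 * (2 * t + 3) + 1 + 2 := by omega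
  · rw [hlow n hn, if_neg (by omega)]
  · rw [hc, if_neg (by omega)]
  · rw [hd, if_neg (by omega)]
  · rw [he, if_pos rfl, show 2 * t + 3 - 2 = 2 * t + 1 by omega, cast_eq_neg_three_div_two]
    ring
end

section
/- For every integer n ≥ 1, the rational number T_n := (2n+1)!! · Σ_{j=1}^{n} (2j)!!/(2j+1)!! satisfies T_n = (2n+2)!! − 2·(2n+1)!!. -/
open Nat

lemma dfac_ne_zero (m : ℕ) : ((m‼ : ℕ) : ℚ) ≠ 0 := by
  exact_mod_cast (Nat.doubleFactorial_pos m).ne'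

theorem doubleFactorial_sum_identity_T (n : ℕ) (hn : 1 ≤ n) :
    (((2 * n + 1)‼ : ℕ) : ℚ) *
      ∑ j ∈ Finset.Icc 1 n, (((2 * j)‼ : ℕ) : ℚ) / (((2 * j + 1)‼ : ℕ) : ℚ)
    = (((2 * n + 2)‼ : ℕ) : ℚ) - 2 * (((2 * n + 1)‼ : ℕ) : ℚ) := by
  induction n, hn using Nat.le_induction with
  | base => norm_num [Nat.doubleFactorial]
  | succ n hn ih =>
    rw [Finset.sum_Icc_succ_top (by omega : 1 ≤ n + 1)]
    have h1 : 2 * (n + 1) + 1 = (2 * n + 1) + 2 := by ring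
    have h2 : 2 * (n + 1) + 2 = (2 * n + 2) + 2 := by ring
    have h3 : 2 * (n + 1) = (2 * n) + 2 := by ring
    rw [h1, h2, h3, Nat.doubleFactorial_add_two, Nat.doubleFactorial_add_two,
      Nat.doubleFactorial_add_two (2*n+2)]
    push_cast
    rw [mul_add, mul_div_cancel₀ _ (mul_ne_zero (by positivity) (dfac_ne_zero (2*n+1)))]
    have hE : (((2 * n + 2)‼ : ℕ) : ℚ) = (2*(n:ℚ)+2) * (((2 * n)‼ : ℕ) : ℚ) := by
      rw [show 2*n+2 = (2*n)+2 from rfl, Nat.doubleFactorial_add_two]; push_cast; ring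
    linear_combination (2*(n:ℚ)+3) * ih - hE
end

section
/- Let p be an odd prime and let α, β be integers. Then the rational number S_p(α,β) := (2p+1)!! · Σ_{j=1}^{p} (αj + β)/(2j+1) is an integer, and it satisfies the congruence 2·S_p(α,β) ≡ α − 2β (mod p) (equivalently, the image of S_p(α,β) in the field with p elements equals α·2⁻¹ − β). -/
open Nat

theorem S_p_integral_and_congruence {p : ℕ} (hp : p.Prime) (hp2 : p ≠ 2) (α β : ℤ) :
    ∃ s : ℤ,
      (s : ℚ) = (((2 * p + 1)‼ : ℕ) : ℚ) *
          ∑ j ∈ Finset.Icc 1 p, ((α * (j : ℤ) + β : ℤ) : ℚ) / (2 * (j : ℚ) + 1) ∧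
      2 * s ≡ α - 2 * β [ZMOD (p : ℤ)] := by
  haveI : Fact p.Prime := ⟨hp⟩
  have hp3 : 3 ≤ p := by have := hp.two_le; omega
  obtain ⟨m, hm⟩ : ∃ m, p = 2 * m + 3 := by
    obtain ⟨t, ht⟩ := hp.odd_of_ne_two hp2
    exact ⟨t - 1, by omega⟩
  have hmp : m ∈ Finset.range p := by simp; omega
  -- divisibility of each denominator into the double factorial
  have hdvd : ∀ j ∈ Finset.Icc 1 p, (2 * j + 1) ∣ (2 * p + 1)‼ := by
    intro j hj
    simp only [Finset.mem_Icc] at hj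
    rw [Nat.doubleFactorial_eq_prod_odd]
    have hmem : j - 1 ∈ Finset.range p := by simp; omega
    have h : (2 * (j - 1 + 1) + 1) ∣ ∏ i ∈ Finset.range p, (2 * (i + 1) + 1) :=
      Finset.dvd_prod_of_mem _ hmem
    rwa [show 2 * (j - 1 + 1) + 1 = 2 * j + 1 by omega] at h
  set D : ℕ → ℕ := fun j => (2 * p + 1)‼ / (2 * j + 1) with hDdef
  have hDmul : ∀ j ∈ Finset.Icc 1 p, D j * (2 * j + 1) = (2 * p + 1)‼ :=
    fun j hj => Nat.div_mul_cancel (hdvd j hj)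
  have hpne : (2 : ZMod p) ≠ 0 := by
    rw [show (2 : ZMod p) = ((2 : ℕ) : ZMod p) by push_cast; ring,
      Ne, ZMod.natCast_eq_zero_iff]
    intro h
    exact hp2 ((Nat.prime_dvd_prime_iff_eq hp Nat.prime_two).mp h)
  -- the key product computation: D (m+1) ≡ -1 mod p
  have hDm : ((D (m + 1) : ℕ) : ZMod p) = -1 := by
    have hmem : m + 1 ∈ Finset.Icc 1 p := by simp; omega
    have h1 : D (m + 1) * p = (2 * p + 1)‼ := by
      have := hDmul (m + 1) hmem
      rwa [show 2 * (m + 1) + 1 = p by omega] at this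
    have h2 : (2 * p + 1)‼ =
        (∏ i ∈ (Finset.range p).erase m, (2 * (i + 1) + 1)) * p := by
      rw [Nat.doubleFactorial_eq_prod_odd,
        ← Finset.prod_erase_mul _ _ hmp]
      congr 1
      omega
    have h3 : D (m + 1) = ∏ i ∈ (Finset.range p).erase m, (2 * (i + 1) + 1) := by
      have := h1.trans h2
      exact Nat.eq_of_mul_eq_mul_right hp.pos this
    rw [h3, Nat.cast_prod]
    -- now a bijection with Ico 1 p and Wilson's lemma
    rw [← ZMod.prod_Ico_one_prime (p := p)]
    refine Finset.prod_bij
      (fun i _ => (((2 * (i + 1) + 1 : ℕ)) : ZMod p).val) ?_ ?_ ?_ ?_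
    · intro a ha
      simp only [Finset.mem_erase, Finset.mem_range] at ha
      simp only [Finset.mem_Ico]
      refine ⟨?_, ZMod.val_lt _⟩
      rw [Nat.one_le_iff_ne_zero, Ne, ZMod.val_eq_zero,
        ZMod.natCast_eq_zero_iff]
      intro hdv
      obtain ⟨c, hc⟩ := hdv
      have hc2 : c ≤ 2 := by nlinarith
      interval_cases c <;> omega
    · intro a ha b hb h
      have h' : ((2 * (a + 1) + 1 : ℕ) : ZMod p) = ((2 * (b + 1) + 1 : ℕ) : ZMod p) := by
        have := congrArg (Nat.cast : ℕ → ZMod p) h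
        rwa [ZMod.natCast_val, ZMod.natCast_val, ZMod.cast_id, ZMod.cast_id] at this
      push_cast at h'
      have hab : ((a : ZMod p)) = (b : ZMod p) := by
        have := mul_left_cancel₀ hpne (by linear_combination h' :
          (2 : ZMod p) * a = 2 * b)
        exact this
      simp only [Finset.mem_erase, Finset.mem_range] at ha hb
      have := congrArg ZMod.val hab
      rwa [ZMod.val_cast_of_lt ha.2, ZMod.val_cast_of_lt hb.2] at this
    · -- surjectivity via cardinality
      intro b hb
      have hcard : (Finset.Ico 1 p).card ≤ ((Finset.range p).erase m).card := by
        rw [Finset.card_erase_of_mem hmp, Nat.card_Ico, Finset.card_range]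
      have := Finset.surj_on_of_inj_on_of_card_le
        (s := (Finset.range p).erase m) (t := Finset.Ico 1 p)
        (fun i _ => (((2 * (i + 1) + 1 : ℕ)) : ZMod p).val) ?_ ?_ hcard b hb
      · obtain ⟨a, ha, hab⟩ := this
        exact ⟨a, ha, hab.symm⟩
      · intro a ha
        simp only [Finset.mem_erase, Finset.mem_range] at ha
        simp only [Finset.mem_Ico]
        refine ⟨?_, ZMod.val_lt _⟩
        rw [Nat.one_le_iff_ne_zero, Ne, ZMod.val_eq_zero,
          ZMod.natCast_eq_zero_iff]
        intro hdv
        obtain ⟨c, hc⟩ := hdv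
        have hc2 : c ≤ 2 := by nlinarith
        interval_cases c <;> omega
      · intro a b ha hb h
        have h' : ((2 * (a + 1) + 1 : ℕ) : ZMod p) = ((2 * (b + 1) + 1 : ℕ) : ZMod p) := by
          have := congrArg (Nat.cast : ℕ → ZMod p) h
          rwa [ZMod.natCast_val, ZMod.natCast_val, ZMod.cast_id, ZMod.cast_id] at this
        push_cast at h'
        have hab : ((a : ZMod p)) = (b : ZMod p) := by
          exact mul_left_cancel₀ hpne (by linear_combination h' :
            (2 : ZMod p) * a = 2 * b)
        simp only [Finset.mem_erase, Finset.mem_range] at ha hb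
        have := congrArg ZMod.val hab
        rwa [ZMod.val_cast_of_lt ha.2, ZMod.val_cast_of_lt hb.2] at this
    · intro a ha
      rw [ZMod.natCast_val, ZMod.cast_id]
  refine ⟨∑ j ∈ Finset.Icc 1 p, (α * j + β) * (D j : ℤ), ?_, ?_⟩
  · push_cast
    rw [Finset.mul_sum]
    refine Finset.sum_congr rfl fun j hj => ?_
    have h1 : ((D j : ℚ)) * (2 * (j : ℚ) + 1) = (((2 * p + 1)‼ : ℕ) : ℚ) := by
      exact_mod_cast congrArg (Nat.cast : ℕ → ℚ) (hDmul j hj)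
    have h2 : (2 * (j : ℚ) + 1) ≠ 0 := by positivity
    field_simp
    linear_combination (α * j + β : ℚ) * h1
  · rw [← ZMod.intCast_eq_intCast_iff]
    push_cast
    have hmem : m + 1 ∈ Finset.Icc 1 p := by simp; omega
    rw [Finset.sum_eq_single_of_mem (m + 1) hmem]
    · have hp0 : ((p : ℕ) : ZMod p) = 0 := ZMod.natCast_self p
      have h0 : (2 : ZMod p) * (m : ZMod p) + 3 = 0 := by
        have := congrArg (Nat.cast : ℕ → ZMod p) hm
        push_cast at this
        rw [hp0] at this
        linear_combination -this
      rw [hDm]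
      push_cast
      linear_combination (-(α : ZMod p)) * h0
    · intro j hj hne
      have hDj : ((D j : ℕ) : ZMod p) = 0 := by
        rw [ZMod.natCast_eq_zero_iff]
        have hpdvd : p ∣ D j * (2 * j + 1) := by
          rw [hDmul j hj, Nat.doubleFactorial_eq_prod_odd]
          have h : (2 * (m + 1) + 1) ∣ ∏ i ∈ Finset.range p, (2 * (i + 1) + 1) :=
            Finset.dvd_prod_of_mem _ hmp
          rwa [show 2 * (m + 1) + 1 = p by omega] at h
        rcases (hp.dvd_mul).mp hpdvd with h | h
        · exact h
        · exfalso
          simp only [Finset.mem_Icc] at hj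
          obtain ⟨c, hc⟩ := h
          have hc2 : c ≤ 2 := by nlinarith
          interval_cases c <;> omega
      rw [hDj]
      ring
end

section
/- Let p be a prime and k a field of characteristic p, and let g ∈ k[[ζ]] be a power series with zero constant term. Define power series Δ_m ∈ k[[ζ]] by Δ_1(ζ) := g(ζ) − ζ and Δ_{m+1}(ζ) := Δ_m(g(ζ)) − Δ_m(ζ) for m ≥ 1. Then Δ_p(ζ) = g^p(ζ) − ζ, where g^p denotes the p-fold composition of g with itself. -/
namespace PowerSeries

section CommSemiring

variable {R : Type*} [CommSemiring R]

theorem add_comp (f₁ f₂ g : PowerSeries R) : comp (f₁ + f₂) g = comp f₁ g + comp f₂ g := by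
  ext n
  simp [comp, add_mul, Finset.sum_add_distrib]

theorem smul_comp (c : R) (f g : PowerSeries R) : comp (c • f) g = c • comp f g := by
  ext n
  simp [comp, Finset.mul_sum, mul_assoc]

theorem X_comp {g : PowerSeries R} (hg : constantCoeff g = 0) : comp X g = g := by
  ext n
  rcases n.eq_zero_or_pos with rfl | hn
  · simp [comp, coeff_X, hg]
  · simp [comp, coeff_X, Finset.sum_ite_eq', hn]

noncomputable def compRightₗ (g : PowerSeries R) : Module.End R (PowerSeries R) where
  toFun f := comp f g
  map_add' f₁ f₂ := add_comp f₁ f₂ g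
  map_smul' c f := smul_comp c f g

theorem compRightₗ_pow_apply_X (g : PowerSeries R) (m : ℕ) :
    (compRightₗ g ^ m) X = compIterate g m := by
  rw [Module.End.pow_apply]
  rfl

end CommSemiring

theorem eq_compRightₗ_sub_one_pow_apply_X {R : Type*} [CommRing R] {g : PowerSeries R}
    (hg : constantCoeff g = 0) {Δ : ℕ → PowerSeries R} (hΔ1 : Δ 1 = g - X)
    (hΔ : ∀ m : ℕ, 1 ≤ m → Δ (m + 1) = comp (Δ m) g - Δ m) {m : ℕ} (hm : 1 ≤ m) :
    Δ m = ((compRightₗ g - 1) ^ m) X := by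
  induction m, hm using Nat.le_induction with
  | base => simp [hΔ1, compRightₗ, X_comp hg]
  | succ m hm ih => simp [hΔ m hm, ih, pow_succ', compRightₗ]

end PowerSeries

theorem delta_p_eq_pth_iterate_sub_id
    {p : ℕ} (hp : p.Prime) {k : Type*} [Field k] (hchar : CharP k p)
    (g : PowerSeries k) (hg : PowerSeries.constantCoeff g = 0)
    (Δ : ℕ → PowerSeries k)
    (hΔ1 : Δ 1 = g - PowerSeries.X)
    (hΔ : ∀ m : ℕ, 1 ≤ m → Δ (m + 1) = PowerSeries.comp (Δ m) g - Δ m) :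
    Δ p = PowerSeries.compIterate g p - PowerSeries.X := by
  have := hchar
  have : Fact p.Prime := ⟨hp⟩
  have : CharP (Module.End k (PowerSeries k)) p := charP_of_injective_algebraMap' k p
  rw [PowerSeries.eq_compRightₗ_sub_one_pow_apply_X hg hΔ1 hΔ hp.one_le,
    sub_pow_char_of_commute _ (Commute.one_right _), one_pow, LinearMap.sub_apply,
    PowerSeries.compRightₗ_pow_apply_X, Module.End.one_apply]
end
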